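/- Fix an integer p ≥ 1, μ ∈ ℝ^p, a positive definite p×p matrix Σ, λ ∈ ℝ^p, and y ∈ ℝ^p, and set A = λ^⊤ Σ^{-1/2}(y−μ). Then the skew-slash density converges to the skew-normal density as the tail parameter tends to infinity: lim_{ν → ∞} 2ν ∫_0^1 u^{ν−1} φ_p(y; μ, u^{-1}Σ) Φ(u^{1/2} A) du = 2 φ_p(y; μ, Σ) Φ(A). -/

import Mathlib

open MeasureTheory Matrix Real Filter

/-- Multivariate normal density `φ_k(y; μ, S)`. -/
noncomputable def mvnPdf {k : Type*} [Fintype k] [DecidableEq k]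
    (μ : k → ℝ) (S : Matrix k k ℝ) (y : k → ℝ) : ℝ :=
  (2 * Real.pi) ^ (-(Fintype.card k : ℝ) / 2) * S.det ^ (-(1 : ℝ) / 2) *
    Real.exp (-((y - μ) ⬝ᵥ (S⁻¹ *ᵥ (y - μ))) / 2)

/-- Standard univariate normal cumulative distribution function `Φ`. -/
noncomputable def stdCDF (x : ℝ) : ℝ :=
  ∫ t in Set.Iic x, (Real.sqrt (2 * Real.pi))⁻¹ * Real.exp (-t ^ 2 / 2)

/-- Inverse of the positive definite square root, `S^{-1/2}`. -/
noncomputable def invSqrt {k : Type*} [Fintype k] [DecidableEq k]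
    {S : Matrix k k ℝ} (hS : S.PosDef) : Matrix k k ℝ :=
  (hS.isHermitian.eigenvectorUnitary.1 *
    diagonal ((↑) ∘ (√·) ∘ hS.isHermitian.eigenvalues) *
    (star hS.isHermitian.eigenvectorUnitary : Matrix k k ℝ))⁻¹

/-!
Substituting `u⁻¹ • Σ` into the normal density gives `φ_p(y; μ, u⁻¹Σ) = u^{p/2} c e^{-uQ/2}`,
so the integrand is `ν u^{ν-1} G(u)` with `G` continuous on `[0, 1]` and
`G(1) = φ_p(y; μ, Σ) Φ(A)`. The `Beta(ν, 1)` densities `ν u^{ν-1}` have unit mass on `(0, 1)`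
and tend to `0` uniformly on every `(0, r]` with `r < 1`, so they form a family of peak
functions at `1` and the integrals converge to `G(1)`.
-/

open Set Topology

@[fun_prop]
lemma continuous_stdCDF : Continuous stdCDF := by
  have hpdf : Integrable fun t : ℝ => (√(2 * π))⁻¹ * Real.exp (-t ^ 2 / 2) := by
    refine (ProbabilityTheory.integrable_gaussianPDFReal 0 1).congr (ae_of_all _ fun t => ?_)
    simp [ProbabilityTheory.gaussianPDFReal]
  refine continuous_iff_continuousAt.2 fun x => ?_
  exact (hpdf.integrableOn.continuousOn_Iic_primitive_Iic (a₀ := x + 1)).continuousAt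
    (Iic_mem_nhds (by linarith))

lemma tendsto_mul_rpow_sub_one_atTop_of_lt_one {r : ℝ} (hr0 : 0 < r) (hr1 : r < 1) :
    Tendsto (fun ν : ℝ => ν * r ^ (ν - 1)) atTop (𝓝 0) := by
  set b := -Real.log r
  have hb : 0 < b := neg_pos.2 (Real.log_neg hr0 hr1)
  have h := (tendsto_rpow_mul_exp_neg_mul_atTop_nhds_zero 1 b hb).const_mul (Real.exp b)
  rw [mul_zero] at h
  refine h.congr fun ν => ?_
  rw [Real.rpow_def_of_pos hr0, Real.rpow_one,
    show Real.log r * (ν - 1) = -b * ν + b by simp only [b]; ring, Real.exp_add]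
  ring

lemma tendstoUniformlyOn_mul_rpow_sub_one {r : ℝ} (hr0 : 0 < r) (hr1 : r < 1) :
    TendstoUniformlyOn (fun ν x : ℝ => ν * x ^ (ν - 1)) 0 atTop (Ioc 0 r) := by
  rw [Metric.tendstoUniformlyOn_iff]
  intro ε hε
  filter_upwards [eventually_ge_atTop 1,
    (tendsto_mul_rpow_sub_one_atTop_of_lt_one hr0 hr1).eventually (gt_mem_nhds hε)]
    with ν hν hνr x ⟨hx0, hxr⟩
  have hmono : ν * x ^ (ν - 1) ≤ ν * r ^ (ν - 1) := by gcongr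
  rw [Pi.zero_apply, dist_zero_left, Real.norm_of_nonneg (by positivity)]
  exact hmono.trans_lt hνr

lemma integral_Ioo_mul_rpow_sub_one {ν : ℝ} (hν : 0 < ν) :
    ∫ u in Ioo (0 : ℝ) 1, ν * u ^ (ν - 1) = 1 := by
  rw [← integral_Ioc_eq_integral_Ioo, ← intervalIntegral.integral_of_le zero_le_one,
    intervalIntegral.integral_const_mul, integral_rpow (Or.inl (by linarith)), sub_add_cancel,
    Real.one_rpow, Real.zero_rpow hν.ne', sub_zero, mul_one_div_cancel hν.ne']

theorem tendsto_integral_Ioo_mul_rpow_sub_one_smul {E : Type*} [NormedAddCommGroup E]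
    [NormedSpace ℝ E] [CompleteSpace E] {g : ℝ → E} {a : E} (hg : IntegrableOn g (Ioo 0 1))
    (hga : Tendsto g (𝓝[<] 1) (𝓝 a)) :
    Tendsto (fun ν : ℝ => ∫ u in Ioo (0 : ℝ) 1, (ν * u ^ (ν - 1)) • g u) atTop (𝓝 a) := by
  refine tendsto_setIntegral_peak_smul_of_integrableOn_of_tendsto measurableSet_Ioo
    measurableSet_Ioo subset_rfl self_mem_nhdsWithin measure_Ioo_lt_top.ne ?_ ?_ ?_ ?_ hg
    (hga.mono_left (nhdsWithin_mono _ Ioo_subset_Iio_self))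
  · filter_upwards [eventually_ge_atTop 0] with ν hν u hu
    exact mul_nonneg hν (Real.rpow_nonneg hu.1.le _)
  · intro U hU h1U
    obtain ⟨δ, hδ, hball⟩ := Metric.isOpen_iff.1 hU 1 h1U
    refine (tendstoUniformlyOn_mul_rpow_sub_one (r := max (1 - δ) (1 / 2)) (by positivity)
      (max_lt (by linarith) (by norm_num))).mono ?_
    rintro x ⟨⟨hx0, hx1⟩, hxU⟩
    refine ⟨hx0, le_max_of_le_left ?_⟩
    by_contra! h
    refine hxU (hball ?_)
    rw [Metric.mem_ball, Real.dist_eq, abs_sub_lt_iff]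
    constructor <;> linarith
  · refine tendsto_const_nhds.congr' ?_
    filter_upwards [eventually_gt_atTop 0] with ν hν
    exact (integral_Ioo_mul_rpow_sub_one hν).symm
  · refine Eventually.of_forall fun ν => ContinuousOn.aestronglyMeasurable ?_ measurableSet_Ioo
    exact continuousOn_const.mul (continuousOn_id.rpow_const fun x hx => Or.inl hx.1.ne')

lemma mvnPdf_inv_smul {k : Type*} [Fintype k] [DecidableEq k] (μ : k → ℝ) {S : Matrix k k ℝ}
    (hS : 0 < S.det) (y : k → ℝ) {u : ℝ} (hu : 0 < u) :
    mvnPdf μ (u⁻¹ • S) y = u ^ ((Fintype.card k : ℝ) / 2) *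
      ((2 * π) ^ (-(Fintype.card k : ℝ) / 2) * S.det ^ (-(1 : ℝ) / 2)) *
        Real.exp (-(u * ((y - μ) ⬝ᵥ (S⁻¹ *ᵥ (y - μ)))) / 2) := by
  have hinv : (u⁻¹ • S)⁻¹ = u • S⁻¹ :=
    Matrix.inv_eq_left_inv (by simp [smul_smul, hu.ne', Matrix.nonsing_inv_mul S hS.ne'.isUnit])
  have hdet : (u⁻¹ • S).det ^ (-(1 : ℝ) / 2) =
      u ^ ((Fintype.card k : ℝ) / 2) * S.det ^ (-(1 : ℝ) / 2) := by
    rw [Matrix.det_smul, Real.mul_rpow (by positivity) hS.le, inv_pow, ← Real.rpow_natCast,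
      ← Real.rpow_neg hu.le, ← Real.rpow_mul hu.le]
    ring_nf
  rw [mvnPdf, hdet, hinv, Matrix.smul_mulVec, dotProduct_smul, smul_eq_mul]
  ring

theorem skew_slash_tendsto_skew_normal_general
    {p : ℕ} (μ lam : Fin p → ℝ)
    (S : Matrix (Fin p) (Fin p) ℝ) (hS : S.PosDef) (y : Fin p → ℝ) :
    Tendsto
      (fun ν : ℝ => 2 * ν * ∫ u in Set.Ioo (0 : ℝ) 1,
        u ^ (ν - 1) * mvnPdf μ (u⁻¹ • S) y *
          stdCDF (Real.sqrt u * (lam ⬝ᵥ (invSqrt hS *ᵥ (y - μ)))))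
      atTop
      (nhds (2 * mvnPdf μ S y * stdCDF (lam ⬝ᵥ (invSqrt hS *ᵥ (y - μ))))) := by
  set A := lam ⬝ᵥ (invSqrt hS *ᵥ (y - μ))
  set G : ℝ → ℝ := fun u => u ^ ((p : ℝ) / 2) *
    ((2 * π) ^ (-(p : ℝ) / 2) * S.det ^ (-(1 : ℝ) / 2)) *
      Real.exp (-(u * ((y - μ) ⬝ᵥ (S⁻¹ *ᵥ (y - μ)))) / 2) * stdCDF (√u * A)
  have hG : Continuous G := by fun_prop (disch := positivity)
  have hG1 : G 1 = mvnPdf μ S y * stdCDF A := by simp [G, mvnPdf]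
  have hlim := (tendsto_integral_Ioo_mul_rpow_sub_one_smul
    ((hG.integrableOn_Icc (a := 0) (b := 1)).mono_set Ioo_subset_Icc_self)
    (hG.tendsto 1 |>.mono_left nhdsWithin_le_nhds)).const_mul 2
  rw [hG1, ← mul_assoc] at hlim
  refine hlim.congr fun ν => ?_
  rw [mul_assoc 2 ν, ← integral_const_mul ν]
  congr 1
  refine setIntegral_congr_fun measurableSet_Ioo fun u hu => ?_
  simp only [G, mvnPdf_inv_smul μ hS.det_pos y hu.1, Fintype.card_fin, smul_eq_mul]
  ring

/-- the skew-slash density converges to the skew-normal density as the tail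
parameter `ν → ∞`. -/
theorem skew_slash_tendsto_skew_normal
    {p : ℕ} (hp : 1 ≤ p) (μ lam : Fin p → ℝ)
    (S : Matrix (Fin p) (Fin p) ℝ) (hS : S.PosDef) (y : Fin p → ℝ) :
    Tendsto
      (fun ν : ℝ => 2 * ν * ∫ u in Set.Ioo (0 : ℝ) 1,
        u ^ (ν - 1) * mvnPdf μ (u⁻¹ • S) y *
          stdCDF (Real.sqrt u * (lam ⬝ᵥ (invSqrt hS *ᵥ (y - μ)))))
      atTop
      (nhds (2 * mvnPdf μ S y * stdCDF (lam ⬝ᵥ (invSqrt hS *ᵥ (y - μ))))) :=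
  skew_slash_tendsto_skew_normal_general μ lam S hS y
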